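/- arXiv:2004.05432 — 2 statements merged into one kernel-verified Lean document; each statement's English description precedes it below -/
import Mathlib

section
/- For every τ with 0 < τ ≤ 1, ∫₀¹ ∫_{τ − τx}^{τ + (1−τ)x} (1/(x·y)) dy dx = π²/6 + (log τ)²/2 + Li₂(1 − τ), where Li₂(u) = ∑_{n=1}^{∞} uⁿ/n² is the dilogarithm. Equivalently, ∫₀¹ (1/x)·( −log(1 − x) + log((1/τ − 1)x + 1) ) dx = π²/6 + (log τ)²/2 + Li₂(1 − τ). -/
/-- The dilogarithm `Li₂(u) = ∑_{n≥1} uⁿ/n²`. -/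
noncomputable def Li2 (u : ℝ) : ℝ := ∑' n : ℕ, u ^ (n + 1) / ((n : ℝ) + 1) ^ 2

/-!
The inner integral is `(1/x) log` of the ratio of the endpoints, which gives the second form
with integrand `(1/x) (-log (1 - x) + log (c x + 1))`, `c = 1/τ - 1 ≥ 0`. This integrand is
nonnegative and has the explicit primitive `Li₂ x + Li₂ (c x / (c x + 1)) + (log (c x + 1))² / 2`,
which is continuous on `[0, 1]` because the dilogarithm series converges uniformly on `[-1, 1]`.
Hence the improper integral is integrable and equals the primitive at `1` minus its value at `0`;
with `Li₂ 1 = ζ(2) = π²/6`, `c / (c + 1) = 1 - τ` and `log (c + 1) = -log τ` this is the claim.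
-/

open Real Set MeasureTheory

lemma Li2_zero : Li2 0 = 0 := by simp [Li2]

lemma Li2_one : Li2 1 = π ^ 2 / 6 := by
  simpa [Li2] using ((hasSum_nat_add_iff' 1).2 hasSum_zeta_two).tsum_eq

lemma summable_one_div_succ_sq : Summable fun n : ℕ => 1 / ((n : ℝ) + 1) ^ 2 := by
  simpa using (summable_nat_add_iff 1).2 (Real.summable_one_div_nat_pow.2 one_lt_two)

lemma continuousOn_Li2 : ContinuousOn Li2 (Icc (-1) 1) := by
  refine continuousOn_tsum (fun n => ((continuous_pow _).div_const _).continuousOn)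
    summable_one_div_succ_sq fun n u hu => ?_
  rw [norm_div, norm_pow, Real.norm_eq_abs, Real.norm_of_nonneg (by positivity)]
  gcongr
  exact pow_le_one₀ (abs_nonneg u) (abs_le.2 hu)

lemma hasDerivAt_Li2 {u : ℝ} (hu : |u| < 1) :
    HasDerivAt Li2 (∑' n : ℕ, u ^ n / ((n : ℝ) + 1)) u := by
  obtain ⟨r, hur, hr1⟩ := exists_between hu
  have hr0 : 0 < r := (abs_nonneg u).trans_lt hur
  refine hasDerivAt_tsum_of_isPreconnected (t := Ioo (-r) r) (y₀ := 0)
    (g := fun (n : ℕ) x => x ^ (n + 1) / ((n : ℝ) + 1) ^ 2)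
    (g' := fun (n : ℕ) x => x ^ n / ((n : ℝ) + 1)) (u := fun (n : ℕ) => r ^ n)
    (summable_geometric_of_lt_one hr0.le hr1) isOpen_Ioo
    (convex_Ioo _ _).isPreconnected (fun n y _ => ?_) (fun n y hy => ?_)
    (by simpa) (by simp) (abs_lt.1 hur)
  · refine ((hasDerivAt_pow (n + 1) y).div_const (((n : ℝ) + 1) ^ 2)).congr_deriv ?_
    push_cast
    field_simp
  · rw [norm_div, norm_pow, Real.norm_eq_abs, Real.norm_of_nonneg (by positivity)]
    calc |y| ^ n / ((n : ℝ) + 1) ≤ |y| ^ n :=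
          div_le_self (by positivity) (by linarith [n.cast_nonneg (α := ℝ)])
      _ ≤ r ^ n := by gcongr; exact abs_le.2 ⟨hy.1.le, hy.2.le⟩

lemma mul_tsum_pow_div_succ {u : ℝ} (hu : |u| < 1) :
    u * ∑' n : ℕ, u ^ n / ((n : ℝ) + 1) = -log (1 - u) := by
  rw [← tsum_mul_left]
  simpa only [pow_succ', mul_div_assoc] using (hasSum_pow_div_log_of_abs_lt_one hu).tsum_eq

-- `Li₂ (c x / (c x + 1))` has derivative `log (c x + 1) / (x (c x + 1))`; the square of the
-- logarithm supplies the missing `c log (c x + 1) / (c x + 1)`.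
noncomputable def triangleAntideriv (c x : ℝ) : ℝ :=
  Li2 x + Li2 (c * x / (c * x + 1)) + log (c * x + 1) ^ 2 / 2

lemma hasDerivAt_triangleAntideriv {c x : ℝ} (hc : 0 ≤ c) (hx : x ∈ Ioo 0 1) :
    HasDerivAt (triangleAntideriv c) (1 / x * (-log (1 - x) + log (c * x + 1))) x := by
  obtain ⟨hx0, hx1⟩ := hx
  have hd : 0 < c * x + 1 := by positivity
  have hφ0 : 0 ≤ c * x / (c * x + 1) := by positivity
  have hφ1 : c * x / (c * x + 1) < 1 := (div_lt_one hd).2 (lt_add_one _)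
  have hxabs : |x| < 1 := by rwa [abs_of_pos hx0]
  have hφabs : |c * x / (c * x + 1)| < 1 := by rwa [abs_of_nonneg hφ0]
  have hlin : HasDerivAt (fun x => c * x + 1) c x := by
    simpa using ((hasDerivAt_id x).const_mul c).add_const 1
  have hφ : HasDerivAt (fun x => c * x / (c * x + 1)) (c / (c * x + 1) ^ 2) x := by
    refine (((hasDerivAt_id x).const_mul c).div hlin hd.ne').congr_deriv ?_
    simp only [id]
    field_simp
    ring
  have hlog : HasDerivAt (fun x => log (c * x + 1) ^ 2 / 2)
      (log (c * x + 1) * (c / (c * x + 1))) x := by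
    refine ((((hasDerivAt_log hd.ne').comp x hlin).pow 2).div_const 2).congr_deriv ?_
    simp only [Function.comp_apply]
    field_simp
    ring
  have hS := mul_tsum_pow_div_succ hxabs
  have hSφ := mul_tsum_pow_div_succ hφabs
  have h1φ : 1 - c * x / (c * x + 1) = (c * x + 1)⁻¹ := by field_simp; ring
  rw [h1φ, log_inv, neg_neg] at hSφ
  refine (((hasDerivAt_Li2 hxabs).add ((hasDerivAt_Li2 hφabs).comp x hφ)).add hlog).congr_deriv ?_
  set S := ∑' n : ℕ, x ^ n / ((n : ℝ) + 1)
  set T := ∑' n : ℕ, (c * x / (c * x + 1)) ^ n / ((n : ℝ) + 1)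
  field_simp at hSφ ⊢
  linear_combination (c * x + 1) ^ 2 * hS + hSφ

lemma continuousOn_triangleAntideriv {c : ℝ} (hc : 0 ≤ c) :
    ContinuousOn (triangleAntideriv c) (Icc 0 1) := by
  have hd : ∀ x ∈ Icc (0 : ℝ) 1, 0 < c * x + 1 := fun x hx => by nlinarith [hx.1]
  have hφ : MapsTo (fun x => c * x / (c * x + 1)) (Icc 0 1) (Icc (-1) 1) := fun x hx => by
    have := hd x hx
    constructor
    · exact le_trans (by norm_num) (div_nonneg (mul_nonneg hc hx.1) (by linarith))
    · rw [div_le_one this]; linarith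
  refine ((continuousOn_Li2.mono (Icc_subset_Icc (by norm_num) le_rfl)).add
    (continuousOn_Li2.comp (by fun_prop (disch := exact fun x hx => (hd x hx).ne')) hφ)).add ?_
  exact ((continuousOn_log.comp (by fun_prop) fun x hx => (hd x hx).ne').pow 2).div_const 2

theorem integral_one_div_mul_neg_log_add_log (c : ℝ) (hc : 0 ≤ c) :
    ∫ x in (0 : ℝ)..1, 1 / x * (-log (1 - x) + log (c * x + 1)) =
      π ^ 2 / 6 + Li2 (c / (c + 1)) + log (c + 1) ^ 2 / 2 := by
  have hcont := continuousOn_triangleAntideriv hc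
  have hderiv : ∀ x ∈ Ioo (0 : ℝ) 1, HasDerivAt (triangleAntideriv c)
      (1 / x * (-log (1 - x) + log (c * x + 1))) x :=
    fun _ hx => hasDerivAt_triangleAntideriv hc hx
  have hnonneg : ∀ x ∈ Ioo (0 : ℝ) 1, 0 ≤ 1 / x * (-log (1 - x) + log (c * x + 1)) :=
    fun x hx => mul_nonneg (one_div_nonneg.2 hx.1.le) (add_nonneg
      (neg_nonneg.2 (log_nonpos (by linarith [hx.2]) (by linarith [hx.1])))
      (log_nonneg (by nlinarith [hx.1])))
  rw [intervalIntegral.integral_eq_sub_of_hasDerivAt_of_le zero_le_one hcont hderiv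
    ((intervalIntegrable_iff_integrableOn_Ioc_of_le zero_le_one).2
      (intervalIntegral.integrableOn_deriv_of_nonneg hcont hderiv hnonneg))]
  simp [triangleAntideriv, Li2_zero, Li2_one]

lemma integral_one_div_mul_vertical_section {τ x : ℝ} (hτ : 0 < τ) (hx : x ∈ Ioo 0 1) :
    ∫ y in (τ - τ * x)..(τ + (1 - τ) * x), 1 / (x * y) =
      1 / x * (-log (1 - x) + log ((1 / τ - 1) * x + 1)) := by
  obtain ⟨hx0, hx1⟩ := hx
  have hlo : 0 < τ - τ * x := by nlinarith
  have hhi : τ + (1 - τ) * x = τ * ((1 / τ - 1) * x + 1) := by field_simp; ring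
  have hpos : 0 < (1 / τ - 1) * x + 1 := by rw [← mul_pos_iff_of_pos_left hτ, ← hhi]; nlinarith
  simp_rw [← one_div_mul_one_div]
  rw [intervalIntegral.integral_const_mul, integral_one_div_of_pos hlo (hhi ▸ mul_pos hτ hpos),
    hhi, show τ - τ * x = τ * (1 - x) by ring, mul_div_mul_left _ _ hτ.ne',
    log_div hpos.ne' (by linarith)]
  ring

/-- The key integral of the triangle area lower bound:
`∫₀¹∫_{τ-τx}^{τ+(1-τ)x} dy dx/(xy) = π²/6 + (log τ)²/2 + Li₂(1-τ)`. -/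
theorem key_triangle_integral (τ : ℝ) (hτ : τ ∈ Set.Ioc (0:ℝ) 1) :
    (∫ x in (0:ℝ)..1, ∫ y in (τ - τ * x)..(τ + (1 - τ) * x), 1 / (x * y)) =
      Real.pi ^ 2 / 6 + (Real.log τ) ^ 2 / 2 + Li2 (1 - τ) ∧
    (∫ x in (0:ℝ)..1,
        (1 / x) * (-Real.log (1 - x) + Real.log ((1 / τ - 1) * x + 1))) =
      Real.pi ^ 2 / 6 + (Real.log τ) ^ 2 / 2 + Li2 (1 - τ) := by
  obtain ⟨hτ0, hτ1⟩ := hτ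
  have hreduced : (∫ x in (0:ℝ)..1, 1 / x * (-log (1 - x) + log ((1 / τ - 1) * x + 1))) =
      π ^ 2 / 6 + log τ ^ 2 / 2 + Li2 (1 - τ) := by
    rw [integral_one_div_mul_neg_log_add_log _ (by rw [sub_nonneg, le_div_iff₀ hτ0]; linarith),
      sub_add_cancel, div_div_eq_mul_div, one_div, log_inv, neg_sq]
    field_simp
    ring
  refine ⟨?_, hreduced⟩
  rw [← hreduced]
  refine intervalIntegral.integral_congr_ae ?_
  filter_upwards [measure_eq_zero_iff_ae_notMem.1 (volume_singleton (a := (1 : ℝ)))] with x hx1 hx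
  rw [uIoc_of_le zero_le_one] at hx
  exact integral_one_div_mul_vertical_section hτ0 ⟨hx.1, lt_of_le_of_ne hx.2 hx1⟩
end

section
/- For every τ ∈ (0,1), the function G(τ) = ∫₀¹ (1/x)·log((1/τ − 1)x + 1) dx is differentiable at τ with G′(τ) = (log τ)/(τ(1 − τ)). Moreover G′(τ) = −(1/τ²)·∫₀¹ dx/((1/τ − 1)x + 1). -/
/-!
With `a = 1/τ - 1` we have `G(τ) = g(a)` for `g(a) = ∫₀¹ log(a x + 1)/x dx`. For `a > -1` the
`a`-derivative `1/(a x + 1)` of the integrand is bounded uniformly for `x ∈ (0, 1]` and parameters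
near `a`, so one may differentiate under the integral sign:
`g'(a) = ∫₀¹ dx/(a x + 1) = log(a + 1)/a`. The chain rule with `d(1/τ - 1)/dτ = -1/τ²` gives
both claims.
-/

open MeasureTheory Real Set

theorem min_one_le_mul_add_one (b : ℝ) {x : ℝ} (hx : x ∈ Icc (0 : ℝ) 1) :
    min 1 (b + 1) ≤ b * x + 1 := by
  obtain ⟨hx0, hx1⟩ := hx
  rcases le_total 0 b with hb | hb
  · exact (min_le_left _ _).trans (by nlinarith)
  · exact (min_le_right _ _).trans (by nlinarith)

theorem integral_one_div_mul_add_one {a : ℝ} (ha : -1 < a) (ha0 : a ≠ 0) :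
    ∫ x in (0 : ℝ)..1, 1 / (a * x + 1) = log (a + 1) / a := by
  have h := intervalIntegral.integral_comp_mul_add (a := 0) (b := 1) (fun u : ℝ => 1 / u) ha0 1
  rw [h, integral_one_div, smul_eq_mul]
  · simp [div_eq_inv_mul]
  · rw [mul_zero, zero_add, mul_one, mem_uIcc]
    rintro (⟨h, -⟩ | ⟨h, -⟩) <;> linarith

theorem abs_one_div_mul_log_mul_add_one_le {a x : ℝ} (ha : -1 < a) (hx : x ∈ Ioc (0 : ℝ) 1) :
    |1 / x * log (a * x + 1)| ≤ |a| / min 1 (a + 1) := by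
  obtain ⟨hx0, hx1⟩ := hx
  have hm : 0 < min 1 (a + 1) := lt_min one_pos (by linarith)
  have hmy : min 1 (a + 1) ≤ a * x + 1 := min_one_le_mul_add_one a ⟨hx0.le, hx1⟩
  have hy : 0 < a * x + 1 := hm.trans_le hmy
  have hupper : log (a * x + 1) / x ≤ a := by
    rw [div_le_iff₀ hx0]; linarith [log_le_sub_one_of_pos hy]
  have hlower : a / (a * x + 1) ≤ log (a * x + 1) / x := by
    rw [le_div_iff₀ hx0]
    calc a / (a * x + 1) * x = 1 - (a * x + 1)⁻¹ := by field_simp; ring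
      _ ≤ log (a * x + 1) := one_sub_inv_le_log_of_pos hy
  have h1 : |a| ≤ |a| / min 1 (a + 1) := le_div_self (abs_nonneg a) hm (min_le_left _ _)
  have h2 : |a| / (a * x + 1) ≤ |a| / min 1 (a + 1) :=
    div_le_div_of_nonneg_left (abs_nonneg a) hm hmy
  have h3 : -(|a| / (a * x + 1)) ≤ a / (a * x + 1) := by
    rw [← neg_div]; exact div_le_div_of_nonneg_right (neg_abs_le a) hy.le
  rw [one_div_mul_eq_div, abs_le]
  constructor <;> linarith [le_abs_self a]

theorem intervalIntegrable_one_div_mul_log_mul_add_one {a : ℝ} (ha : -1 < a) :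
    IntervalIntegrable (fun x => 1 / x * log (a * x + 1)) volume 0 1 := by
  refine (intervalIntegrable_const (c := |a| / min 1 (a + 1))).mono_fun' (by fun_prop) ?_
  rw [uIoc_of_le zero_le_one]
  filter_upwards [ae_restrict_mem measurableSet_Ioc] with x hx
  exact abs_one_div_mul_log_mul_add_one_le ha hx

theorem hasDerivAt_one_div_mul_log_mul_add_one {b x : ℝ} (hx : x ≠ 0) (hb : b * x + 1 ≠ 0) :
    HasDerivAt (fun c => 1 / x * log (c * x + 1)) (1 / (b * x + 1)) b := by
  refine ((((hasDerivAt_mul_const x).add_const 1).log hb).const_mul (1 / x)).congr_deriv ?_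
  field_simp

theorem hasDerivAt_integral_one_div_mul_log_mul_add_one {a : ℝ} (ha : -1 < a) :
    HasDerivAt (fun b => ∫ x in (0 : ℝ)..1, 1 / x * log (b * x + 1))
      (∫ x in (0 : ℝ)..1, 1 / (a * x + 1)) a := by
  set δ := (a + 1) / 2 with hδ_def
  have hδ : 0 < δ := by linarith
  have hm : 0 < min 1 δ := lt_min one_pos hδ
  have hden : ∀ b ∈ Metric.ball a δ, ∀ x ∈ Ioc (0 : ℝ) 1, min 1 δ ≤ b * x + 1 := by
    intro b hb x hx
    rw [Metric.mem_ball, Real.dist_eq, abs_lt] at hb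
    exact (min_le_min_left _ (by linarith)).trans
      (min_one_le_mul_add_one b (Ioc_subset_Icc_self hx))
  refine (intervalIntegral.hasDerivAt_integral_of_dominated_loc_of_deriv_le
    (F := fun b x => 1 / x * log (b * x + 1)) (F' := fun b x => 1 / (b * x + 1))
    (bound := fun _ => 1 / min 1 δ) (Metric.ball_mem_nhds a hδ)
    (.of_forall fun _ => by fun_prop) (intervalIntegrable_one_div_mul_log_mul_add_one ha)
    (by measurability) ?_ intervalIntegrable_const ?_).2
  · refine ae_of_all _ fun x hx b hb => ?_
    rw [uIoc_of_le zero_le_one] at hx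
    have hpos := hm.trans_le (hden b hb x hx)
    rw [Real.norm_eq_abs, abs_of_pos (one_div_pos.2 hpos)]
    exact one_div_le_one_div_of_le hm (hden b hb x hx)
  · refine ae_of_all _ fun x hx b hb => ?_
    rw [uIoc_of_le zero_le_one] at hx
    exact hasDerivAt_one_div_mul_log_mul_add_one hx.1.ne' (hm.trans_le (hden b hb x hx)).ne'

/-- Differentiation under the integral sign: the function
`G(τ) = ∫₀¹ (1/x)·log((1/τ - 1)x + 1) dx` is differentiable on `(0,1)` with
`G'(τ) = (log τ)/(τ(1 - τ)) = -(1/τ²)·∫₀¹ dx/((1/τ - 1)x + 1)`. -/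
theorem derivative_of_G (τ : ℝ) (hτ : τ ∈ Set.Ioo (0:ℝ) 1) :
    HasDerivAt (fun t : ℝ => ∫ x in (0:ℝ)..1, (1 / x) * Real.log ((1 / t - 1) * x + 1))
      (Real.log τ / (τ * (1 - τ))) τ ∧
    Real.log τ / (τ * (1 - τ)) =
      -(1 / τ ^ 2) * ∫ x in (0:ℝ)..1, 1 / ((1 / τ - 1) * x + 1) := by
  obtain ⟨hτ0, hτ1⟩ := hτ
  have ha : 0 < 1 / τ - 1 := sub_pos.2 (one_lt_one_div hτ0 hτ1)
  have hG' : -(1 / τ ^ 2) * ∫ x in (0:ℝ)..1, 1 / ((1 / τ - 1) * x + 1) =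
      log τ / (τ * (1 - τ)) := by
    rw [integral_one_div_mul_add_one (by linarith) ha.ne', sub_add_cancel, one_div τ, log_inv]
    have : 1 - τ ≠ 0 := by linarith
    field_simp
  have hinner : HasDerivAt (fun t : ℝ => 1 / t - 1) (-(1 / τ ^ 2)) τ := by
    simpa only [one_div] using (hasDerivAt_inv hτ0.ne').sub_const 1
  refine ⟨?_, hG'.symm⟩
  rw [← hG', mul_comm]
  exact (hasDerivAt_integral_one_div_mul_log_mul_add_one (by linarith)).comp τ hinner
end
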